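/- If E and Ẽ are fibrewise spaces over B that are fibrewise homotopy equivalent, then TC_{B,r}(E) = TC_{B,r}(Ẽ). -/

import Mathlib

/-!
Let `f : E → E'`, `g : E' → E` be inverse fibrewise homotopy equivalences. Applying `f` and `g`
coordinatewise gives maps `f^r`, `g^r` of the fibred powers with `g^r ∘ f^r ≃ id`, and composing
paths with `g` gives `g_* : P_B(E') → P_B(E)` with `Π_{r,E} ∘ g_* = g^r ∘ Π_{r,E'}`. If `s` is a
local homotopy section of `Π_{r,E'}` over `U`, then `g_* ∘ s ∘ f^r` is one of `Π_{r,E}` over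
`(f^r)⁻¹ U`, because `Π_{r,E} ∘ g_* ∘ s ∘ f^r = g^r ∘ Π_{r,E'} ∘ s ∘ f^r ≃ g^r ∘ f^r ≃ id`.
So `TC_{B,r}(E) ≤ TC_{B,r}(E')`, and equality follows by symmetry.
-/

open Set

/-- Two continuous maps are fibrewise homotopic over `B`: there is a homotopy
whose every time-slice commutes with the projections to `B`. -/
def FibHomotopic {B X Y : Type*} [TopologicalSpace B] [TopologicalSpace X] [TopologicalSpace Y]
    (pX : X → B) (pY : Y → B) (f g : C(X, Y)) : Prop :=
  ∃ H : f.Homotopy g, ∀ (x : X) (t : unitInterval), pY (H (t, x)) = pX x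

/-- Sequential parametrized homotopic distance of a family of fibrewise maps:
the least `n` such that `X` admits an open cover by `n + 1` open sets on each of
which all the maps are pairwise fibrewise homotopic (`∞` if none exists). -/
noncomputable def fibDist {B X Y ι : Type*} [TopologicalSpace B] [TopologicalSpace X]
    [TopologicalSpace Y] (pX : X → B) (pY : Y → B) (f : ι → C(X, Y)) : ℕ∞ :=
  sInf {n : ℕ∞ | ∃ k : ℕ, (k : ℕ∞) = n ∧ ∃ U : Fin (k + 1) → Set X,
    (∀ i, IsOpen (U i)) ∧ (⋃ i, U i) = Set.univ ∧
    ∀ i s t, FibHomotopic (fun x : U i => pX (x : X)) pY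
      ((f s).restrict (U i)) ((f t).restrict (U i))}

/-- Fibrewise sectional category of a fibrewise map `f : E → X` over `B`: the least `k`
such that `X` has an open cover by `k + 1` open sets, each admitting a fibrewise map
`s : U → E` with `f ∘ s` fibrewise homotopic to the inclusion. -/
noncomputable def fibSecat {B E X : Type*} [TopologicalSpace B] [TopologicalSpace E]
    [TopologicalSpace X] (pE : E → B) (pX : X → B) (f : C(E, X)) : ℕ∞ :=
  sInf {n : ℕ∞ | ∃ k : ℕ, (k : ℕ∞) = n ∧ ∃ U : Fin (k + 1) → Set X,
    (∀ i, IsOpen (U i)) ∧ (⋃ i, U i) = Set.univ ∧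
    ∀ i, ∃ s : C(U i, E), (∀ x : U i, pE (s x) = pX (x : X)) ∧
      FibHomotopic (fun x : U i => pX (x : X)) pX (f.comp s)
        ⟨Subtype.val, continuous_subtype_val⟩}

/-- The fibrewise free path space of `Y` over `B`: pairs `(b, γ)` with `p_Y ∘ γ`
constant at `b`. -/
abbrev FibPathSpace {B Y : Type*} [TopologicalSpace B] [TopologicalSpace Y] (pY : Y → B) :
    Type _ := {z : B × C(unitInterval, Y) // ∀ t, pY (z.2 t) = z.1}

/-- The `r`-fold fibred product of `Y` over `B`. -/
abbrev FibPow {B Y : Type*} [TopologicalSpace B] [TopologicalSpace Y] (pY : Y → B) (r : ℕ) :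
    Type _ := {v : Fin r → Y // ∀ i j, pY (v i) = pY (v j)}

/-- The time `i / (r - 1)` in the unit interval. -/
noncomputable def evalTime (r : ℕ) (i : Fin r) : unitInterval :=
  ⟨(i : ℝ) / ((r : ℝ) - 1), by
    have h1 : 1 ≤ r := Nat.one_le_iff_ne_zero.mpr (by rintro rfl; exact i.elim0)
    have h0 : (0:ℝ) ≤ (r:ℝ) - 1 := by
      have : (1:ℝ) ≤ (r:ℝ) := by exact_mod_cast h1
      linarith
    have hi : (i:ℝ) ≤ (r:ℝ) - 1 := by
      have h2 : ((i:ℕ):ℝ) ≤ ((r - 1 : ℕ):ℝ) := Nat.cast_le.mpr (by omega)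
      rwa [Nat.cast_sub h1, Nat.cast_one] at h2
    exact ⟨div_nonneg (by positivity) h0, div_le_one_of_le₀ hi h0⟩⟩

/-- The fibrewise evaluation fibration `Π_{r,Y} : P_B(Y) → Y_B^r`, sending `(b, γ)` to
`(γ(0), γ(1/(r-1)), …, γ(1))`. -/
noncomputable def fibPi {B Y : Type*} [TopologicalSpace B] [TopologicalSpace Y] (pY : Y → B)
    (r : ℕ) : C(FibPathSpace pY, FibPow pY r) :=
  ⟨fun z => ⟨fun i => z.1.2 (evalTime r i),
      fun i j => (z.2 (evalTime r i)).trans (z.2 (evalTime r j)).symm⟩, by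
    apply Continuous.subtype_mk
    exact continuous_pi fun i =>
      (continuous_eval_const (evalTime r i)).comp
        (continuous_snd.comp continuous_subtype_val)⟩

/-- The `i`-th projection `Y_B^r → Y`. -/
def fibPrj {B Y : Type*} [TopologicalSpace B] [TopologicalSpace Y] (pY : Y → B) (r : ℕ)
    (i : Fin r) : C(FibPow pY r, Y) :=
  ⟨fun v => v.1 i, ((continuous_apply i).comp continuous_subtype_val)⟩

/-- Fibrewise homotopy equivalence of two fibrewise spaces over `B`. -/
def FibHtpyEquiv {B E E' : Type*} [TopologicalSpace B] [TopologicalSpace E] [TopologicalSpace E']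
    (pE : E → B) (pE' : E' → B) : Prop :=
  ∃ (f : C(E, E')) (g : C(E', E)), (∀ x, pE' (f x) = pE x) ∧ (∀ x, pE (g x) = pE' x) ∧
    FibHomotopic pE pE (g.comp f) (ContinuousMap.id E) ∧
    FibHomotopic pE' pE' (f.comp g) (ContinuousMap.id E')

section FibHomotopic

variable {B W X Y Z : Type*} [TopologicalSpace B] [TopologicalSpace W] [TopologicalSpace X]
  [TopologicalSpace Y] [TopologicalSpace Z] {pW : W → B} {pX : X → B} {pY : Y → B} {pZ : Z → B}

theorem FibHomotopic.trans {f g h : C(X, Y)} (hfg : FibHomotopic pX pY f g)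
    (hgh : FibHomotopic pX pY g h) : FibHomotopic pX pY f h := by
  obtain ⟨H, hH⟩ := hfg
  obtain ⟨K, hK⟩ := hgh
  refine ⟨H.trans K, fun x t => ?_⟩
  rw [ContinuousMap.Homotopy.trans_apply]
  split_ifs
  exacts [hH x _, hK x _]

theorem FibHomotopic.postcomp {f g : C(X, Y)} (φ : C(Y, Z)) (hφ : ∀ y, pZ (φ y) = pY y)
    (h : FibHomotopic pX pY f g) : FibHomotopic pX pZ (φ.comp f) (φ.comp g) := by
  obtain ⟨H, hH⟩ := h
  exact ⟨⟨⟨fun p => φ (H p), by fun_prop⟩, fun x => by simp, fun x => by simp⟩,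
    fun x t => (hφ _).trans (hH x t)⟩

theorem FibHomotopic.precomp {f g : C(X, Y)} (ψ : C(W, X)) (hψ : ∀ w, pX (ψ w) = pW w)
    (h : FibHomotopic pX pY f g) : FibHomotopic pW pY (f.comp ψ) (g.comp ψ) := by
  obtain ⟨H, hH⟩ := h
  exact ⟨⟨⟨fun p => H (p.1, ψ p.2), by fun_prop⟩, fun x => by simp, fun x => by simp⟩,
    fun w t => (hH (ψ w) t).trans (hψ w)⟩

end FibHomotopic

section FibredConstructions

variable {B X Y : Type*} [TopologicalSpace B] [TopologicalSpace X] [TopologicalSpace Y]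
  {pX : X → B} {pY : Y → B}

def fibPowMap (f : C(X, Y)) (hf : ∀ x, pY (f x) = pX x) (r : ℕ) :
    C(FibPow pX r, FibPow pY r) :=
  ⟨fun v => ⟨fun j => f (v.1 j), fun i j => by rw [hf, hf]; exact v.2 i j⟩,
    (continuous_pi fun j => f.continuous.comp
      ((continuous_apply j).comp continuous_subtype_val)).subtype_mk _⟩

def fibPathMap (f : C(X, Y)) (hf : ∀ x, pY (f x) = pX x) :
    C(FibPathSpace pX, FibPathSpace pY) :=
  ⟨fun z => ⟨(z.1.1, f.comp z.1.2), fun t => (hf _).trans (z.2 t)⟩, by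
    apply Continuous.subtype_mk
    exact (continuous_fst.comp continuous_subtype_val).prodMk
      ((ContinuousMap.continuous_postcomp f).comp (continuous_snd.comp continuous_subtype_val))⟩

theorem fibPi_comp_fibPathMap (f : C(X, Y)) (hf : ∀ x, pY (f x) = pX x) (r : ℕ) :
    (fibPi pY r).comp (fibPathMap f hf) = (fibPowMap f hf r).comp (fibPi pX r) :=
  rfl

theorem fibHomotopic_fibPowMap {f g : C(X, Y)} (hf : ∀ x, pY (f x) = pX x)
    (hg : ∀ x, pY (g x) = pX x) (h : FibHomotopic pX pY f g) (r : ℕ) [NeZero r] :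
    FibHomotopic (fun v : FibPow pX r => pX (v.1 0)) (fun v : FibPow pY r => pY (v.1 0))
      (fibPowMap f hf r) (fibPowMap g hg r) := by
  obtain ⟨H, hH⟩ := h
  refine ⟨⟨⟨fun p => ⟨fun j => H (p.1, p.2.1 j), fun i j => ?_⟩,
    (continuous_pi fun j => H.continuous.comp (continuous_fst.prodMk
      ((continuous_apply j).comp (continuous_subtype_val.comp continuous_snd)))).subtype_mk _⟩,
    fun v => ?_, fun v => ?_⟩, fun v t => hH _ t⟩
  · rw [hH, hH]
    exact p.2.2 i j
  · exact Subtype.ext (funext fun j => H.apply_zero _)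
  · exact Subtype.ext (funext fun j => H.apply_one _)

end FibredConstructions

section FibSecat

variable {B E X E' X' : Type*} [TopologicalSpace B] [TopologicalSpace E] [TopologicalSpace X]
  [TopologicalSpace E'] [TopologicalSpace X'] {pE : E → B} {pX : X → B} {pE' : E' → B}
  {pX' : X' → B}

theorem fibSecat_le_of_fibHomotopyDominated (f : C(E, X)) (f' : C(E', X')) (φ : C(X, X'))
    (ψ : C(E', E)) (χ : C(X', X)) (hφ : ∀ x, pX' (φ x) = pX x) (hψ : ∀ e, pE (ψ e) = pE' e)
    (hχ : ∀ x, pX (χ x) = pX' x) (hcomm : f.comp ψ = χ.comp f')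
    (hχφ : FibHomotopic pX pX (χ.comp φ) (ContinuousMap.id X)) :
    fibSecat pE pX f ≤ fibSecat pE' pX' f' := by
  apply sInf_le_sInf
  rintro n ⟨k, rfl, U, hU, hcover, hsec⟩
  refine ⟨k, rfl, fun i => φ ⁻¹' U i, fun i => (hU i).preimage φ.continuous, ?_, fun i => ?_⟩
  · simp [← preimage_iUnion, hcover]
  obtain ⟨s, hs, hfs⟩ := hsec i
  let ρ : C(φ ⁻¹' U i, U i) := φ.restrictPreimage (U i)
  refine ⟨ψ.comp (s.comp ρ), fun x => (hψ _).trans ((hs _).trans (hφ x)), ?_⟩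
  have hχfs := (hfs.precomp ρ fun x => hφ x).postcomp χ hχ
  have hχφV := hχφ.precomp (⟨Subtype.val, continuous_subtype_val⟩ : C(φ ⁻¹' U i, X)) fun _ => rfl
  rw [← ContinuousMap.comp_assoc, hcomm]
  exact hχfs.trans hχφV

end FibSecat

theorem FibHtpyEquiv.symm {B E E' : Type*} [TopologicalSpace B] [TopologicalSpace E]
    [TopologicalSpace E'] {pE : E → B} {pE' : E' → B} (h : FibHtpyEquiv pE pE') :
    FibHtpyEquiv pE' pE :=
  let ⟨f, g, hf, hg, hgf, hfg⟩ := h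
  ⟨g, f, hg, hf, hfg, hgf⟩

theorem fibSecat_fibPi_le_of_fibHtpyEquiv {B E E' : Type*} [TopologicalSpace B]
    [TopologicalSpace E] [TopologicalSpace E'] (r : ℕ) [NeZero r] {pE : E → B} {pE' : E' → B}
    (h : FibHtpyEquiv pE pE') :
    fibSecat (fun z : FibPathSpace pE => z.1.1) (fun v : FibPow pE r => pE (v.1 0))
        (fibPi pE r) ≤
      fibSecat (fun z : FibPathSpace pE' => z.1.1) (fun v : FibPow pE' r => pE' (v.1 0))
        (fibPi pE' r) := by
  obtain ⟨f, g, hf, hg, hgf, -⟩ := h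
  refine fibSecat_le_of_fibHomotopyDominated _ _ (fibPowMap f hf r) (fibPathMap g hg)
    (fibPowMap g hg r) (fun _ => hf _) (fun _ => rfl) (fun _ => hg _)
    (fibPi_comp_fibPathMap g hg r) ?_
  exact fibHomotopic_fibPowMap (fun x => (hg (f x)).trans (hf x)) (fun _ => rfl) hgf r

theorem stmt18_general {B E E' : Type*} [TopologicalSpace B] [TopologicalSpace E] [TopologicalSpace E']
    (r : ℕ) [NeZero r] (pE : E → B) (pE' : E' → B)
    (heq : FibHtpyEquiv pE pE') :
    fibSecat (fun z : FibPathSpace pE => z.1.1) (fun v : FibPow pE r => pE (v.1 0))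
        (fibPi pE r) =
      fibSecat (fun z : FibPathSpace pE' => z.1.1) (fun v : FibPow pE' r => pE' (v.1 0))
        (fibPi pE' r) :=
  le_antisymm (fibSecat_fibPi_le_of_fibHtpyEquiv r heq)
    (fibSecat_fibPi_le_of_fibHtpyEquiv r heq.symm)

/-- Fibrewise homotopy equivalent spaces have the same sequential parametrized
topological complexity. -/
theorem stmt18 {B E E' : Type*} [TopologicalSpace B] [TopologicalSpace E] [TopologicalSpace E']
    (r : ℕ) [NeZero r] (hr : 2 ≤ r) (pE : E → B) (pE' : E' → B)
    (hpE : Continuous pE) (hpE' : Continuous pE')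
    (heq : FibHtpyEquiv pE pE') :
    fibSecat (fun z : FibPathSpace pE => z.1.1) (fun v : FibPow pE r => pE (v.1 0))
        (fibPi pE r) =
      fibSecat (fun z : FibPathSpace pE' => z.1.1) (fun v : FibPow pE' r => pE' (v.1 0))
        (fibPi pE' r) :=
  stmt18_general r pE pE' heq
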